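/- Let F ⊣ G be an adjunction with F : C → D and G : D → C, let I be an object of C and O an object of D, and write (-)^* : C(I, G O) ≅ D(F I, O) for the induced hom-set bijection. Let A be an alphabet, let L_C : O_A → C be a C-language with L_C(left) = I and L_C(right) = G O, and let L_D : O_A → D be the D-language with L_D(left) = F I, L_D(right) = O and L_D(▷w◁) = (L_C(▷w◁))^* for all w ∈ A*. Then the adjunction F ⊣ G lifts to an adjunction F̄ ⊣ Ḡ with F̄ : Auto(L_C) → Auto(L_D) and Ḡ : Auto(L_D) → Auto(L_C) such that St ∘ F̄ = F ∘ St and St ∘ Ḡ = G ∘ St, where St denotes in each case the functor evaluating an automaton at the object 'center'. -/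

import Mathlib

open CategoryTheory CategoryTheory.Limits

universe v u v₂ u₂

/-! ### The input category `I_A` of word automata -/

inductive WObj (A : Type) : Type where
  | left | center | right

inductive WEdge {A : Type} : WObj A → WObj A → Type where
  | tri : WEdge WObj.left WObj.center
  | letter (a : A) : WEdge WObj.center WObj.center
  | tril : WEdge WObj.center WObj.right

instance (A : Type) : Quiver (WObj A) := ⟨WEdge⟩

/-- `I_A`: the free category on the graph `left -▷→ center -a→ center -◁→ right`. -/
def IA (A : Type) : Type := Paths (WObj A)

instance (A : Type) : Category (IA A) :=
  inferInstanceAs (Category (Paths (WObj A)))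

def IA.l (A : Type) : IA A := WObj.left
def IA.c (A : Type) : IA A := WObj.center
def IA.r (A : Type) : IA A := WObj.right

/-- The generating morphism `▷ : left ⟶ center`. -/
def IA.tri (A : Type) : IA.l A ⟶ IA.c A := Quiver.Hom.toPath WEdge.tri
/-- The generating morphism `a : center ⟶ center` for a letter `a`. -/
def IA.letter {A : Type} (a : A) : IA.c A ⟶ IA.c A := Quiver.Hom.toPath (WEdge.letter a)
/-- The generating morphism `◁ : center ⟶ right`. -/
def IA.tril (A : Type) : IA.c A ⟶ IA.r A := Quiver.Hom.toPath WEdge.tril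

/-- The word spelled by a path in the graph (the sequence of `letter` edges used). -/
def toWord {A : Type} : ∀ {X Y : WObj A}, Quiver.Path X Y → List A
  | _, _, Quiver.Path.nil => []
  | _, _, Quiver.Path.cons p e =>
      toWord p ++ (match e with
        | WEdge.letter a => [a]
        | _ => [])

/-- The path `center → center` spelling a word `w`. -/
def pathCC {A : Type} : List A → ((IA.c A) ⟶ (IA.c A))
  | [] => Quiver.Path.nil
  | a :: w => (Quiver.Hom.toPath (WEdge.letter a)).comp (pathCC w)

/-- The path `▷ w ◁ : left ⟶ right` spelling a word `w`. -/
def pathLR {A : Type} (w : List A) : (IA.l A) ⟶ (IA.r A) :=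
  IA.tri A ≫ pathCC w ≫ IA.tril A

theorem path_from_right {A : Type} : ∀ {Z : WObj A},
    Quiver.Path (WObj.right : WObj A) Z → Z = WObj.right
  | _, Quiver.Path.nil => rfl
  | _, Quiver.Path.cons p e => by
      have h := path_from_right p
      subst h
      exact nomatch e

theorem path_ll_nil {A : Type} (p : Quiver.Path (WObj.left : WObj A) WObj.left) :
    p = Quiver.Path.nil := by
  cases p with
  | nil => rfl
  | cons q e => exact nomatch e

theorem path_rr_nil {A : Type} (p : Quiver.Path (WObj.right : WObj A) WObj.right) :
    p = Quiver.Path.nil := by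
  cases p with
  | nil => rfl
  | cons q e =>
      have h := path_from_right q
      subst h
      exact nomatch e

theorem path_rl_false {A : Type} (p : Quiver.Path (WObj.right : WObj A) WObj.left) :
    False := by
  have := path_from_right p
  exact nomatch this

/-- `O_A`: the full subcategory of `I_A` on the objects `left` and `right`. -/
def OA (A : Type) : Type := ObjectProperty.FullSubcategory (fun X : IA A => X ≠ IA.c A)

instance (A : Type) : Category (OA A) :=
  inferInstanceAs (Category (ObjectProperty.FullSubcategory (fun X : IA A => X ≠ IA.c A)))

/-- The inclusion functor `ι : O_A ⥤ I_A`. -/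
def OA.inc (A : Type) : OA A ⥤ IA A := ObjectProperty.ι _

def OA.l (A : Type) : OA A := ⟨IA.l A, fun h => by cases h⟩
def OA.r (A : Type) : OA A := ⟨IA.r A, fun h => by cases h⟩

/-- The morphism `▷ w ◁ : left ⟶ right` of `O_A`. -/
def OA.word {A : Type} (w : List A) : OA.l A ⟶ OA.r A := ObjectProperty.homMk (pathLR w)

/-- The language `O_A ⥤ C` determined by two objects `LI`, `LO` of `C` and a function
assigning to every word `w ∈ A*` a morphism `LI ⟶ LO` (the value at `▷w◁`). -/
def mkLang {A : Type} {C : Type u} [Category.{v} C] (LI LO : C)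
    (f : List A → (LI ⟶ LO)) : OA A ⥤ C where
  obj X :=
    match X with
    | ⟨WObj.left, _⟩ => LI
    | ⟨WObj.right, _⟩ => LO
    | ⟨WObj.center, h⟩ => absurd rfl h
  map {X Y} p :=
    match X, Y, p with
    | ⟨WObj.left, _⟩, ⟨WObj.left, _⟩, _ => 𝟙 LI
    | ⟨WObj.left, _⟩, ⟨WObj.right, _⟩, p => f (toWord p.hom)
    | ⟨WObj.right, _⟩, ⟨WObj.right, _⟩, _ => 𝟙 LO
    | ⟨WObj.right, _⟩, ⟨WObj.left, _⟩, p => (path_rl_false p.hom).elim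
    | ⟨WObj.center, h⟩, _, _ => absurd rfl h
    | _, ⟨WObj.center, h⟩, _ => absurd rfl h
  map_id X := by
    rcases X with ⟨(_|_|_), hX⟩
    · rfl
    · exact absurd rfl hX
    · rfl
  map_comp {X Y Z} p q := by
    rcases X with ⟨(_|_|_), hX⟩ <;> rcases Y with ⟨(_|_|_), hY⟩ <;>
      rcases Z with ⟨(_|_|_), hZ⟩ <;>
      first
        | exact absurd rfl hX
        | exact absurd rfl hY
        | exact absurd rfl hZ
        | exact (path_rl_false p.hom).elim
        | exact (path_rl_false q.hom).elim
        | exact (Category.id_comp _).symm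
        | (obtain ⟨p⟩ := p
           have hp := path_ll_nil p
           subst hp
           show f (toWord (Quiver.Path.comp Quiver.Path.nil q.hom)) = 𝟙 LI ≫ f (toWord q.hom)
           exact (congrArg (fun r => f (toWord r)) (Quiver.Path.nil_comp _)).trans
             (Category.id_comp _).symm)
        | (obtain ⟨q⟩ := q
           have hq := path_rr_nil q
           subst hq
           show f (toWord (Quiver.Path.comp p.hom Quiver.Path.nil)) = f (toWord p.hom) ≫ 𝟙 LO
           exact (congrArg (fun r => f (toWord r)) (Quiver.Path.comp_nil _)).trans
             (Category.comp_id _).symm)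

/-- A `C`-automaton `M` accepts the `C`-language `L` when `ι ⋙ M = L`. -/
def Accepts {A : Type} {C : Type u} [Category.{v} C] (M : IA A ⥤ C) (L : OA A ⥤ C) : Prop :=
  OA.inc A ⋙ M = L

/-- The category `Auto(L)` of `C`-automata accepting the language `L`; morphisms are
natural transformations whose whiskering along `ι` is the identity of `L`. -/
def Auto (A : Type) {C : Type u} [Category.{v} C] (L : OA A ⥤ C) : Type _ :=
  { M : IA A ⥤ C // Accepts M L }

instance (A : Type) {C : Type u} [Category.{v} C] (L : OA A ⥤ C) :
    Category (Auto A L) where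
  Hom M N := { α : M.1 ⟶ N.1 //
    CategoryTheory.Functor.whiskerLeft (OA.inc A) α = eqToHom (M.2.trans N.2.symm) }
  id M := ⟨𝟙 M.1, by simp⟩
  comp {M N P} f g := ⟨f.1 ≫ g.1, by
    rw [CategoryTheory.Functor.whiskerLeft_comp, f.2, g.2, eqToHom_trans]⟩
  id_comp f := Subtype.ext (Category.id_comp _)
  comp_id f := Subtype.ext (Category.comp_id _)
  assoc f g h := Subtype.ext (Category.assoc _ _ _)

/-- The functor `St : Auto(L) ⥤ C` evaluating an automaton at the object `center`. -/
def St (A : Type) {C : Type u} [Category.{v} C] (L : OA A ⥤ C) : Auto A L ⥤ C where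
  obj M := M.1.obj (IA.c A)
  map f := f.1.app (IA.c A)
  map_id _ := rfl
  map_comp _ _ := rfl

/-- The underlying natural transformation of a morphism in `Auto(L)`. -/
def Auto.nat {A : Type} {C : Type u} [Category.{v} C] {L : OA A ⥤ C} {M N : Auto A L}
    (α : M ⟶ N) : M.1 ⟶ N.1 :=
  (show { β : M.1 ⟶ N.1 //
      CategoryTheory.Functor.whiskerLeft (OA.inc A) β = eqToHom (M.2.trans N.2.symm) } from α).1

/-- Constructor for objects of `Auto(L)`. -/
def Auto.mk {A : Type} {C : Type u} [Category.{v} C] {L : OA A ⥤ C}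
    (M : IA A ⥤ C) (h : Accepts M L) : Auto A L := ⟨M, h⟩

/-! ### Auxiliary lemmas -/

section Helpers

variable {A : Type} {C : Type u} {D : Type u₂} [Category.{v} C] [Category.{v₂} D]

@[simp] theorem toWord_nil {A : Type} {X : WObj A} :
    toWord (Quiver.Path.nil : Quiver.Path X X) = [] := by
  simp [toWord]

@[simp] theorem toWord_cons_tri {A : Type} (p : Quiver.Path (WObj.left : WObj A) WObj.left) :
    toWord (p.cons WEdge.tri) = toWord p := by
  simp [toWord]

@[simp] theorem toWord_cons_letter {A : Type} {X : WObj A} (p : Quiver.Path X WObj.center)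
    (a : A) : toWord (p.cons (WEdge.letter a)) = toWord p ++ [a] := by
  simp [toWord]

@[simp] theorem toWord_cons_tril {A : Type} {X : WObj A} (p : Quiver.Path X WObj.center) :
    toWord (p.cons WEdge.tril) = toWord p := by
  simp [toWord]

theorem pathCC_append (w v : List A) :
    pathCC (w ++ v) = (pathCC w).comp (pathCC v) := by
  induction w with
  | nil => exact (Quiver.Path.nil_comp _).symm
  | cons a w ih =>
      show (Quiver.Hom.toPath (WEdge.letter a)).comp (pathCC (w ++ v)) = _
      rw [ih]
      exact (Quiver.Path.comp_assoc _ _ _).symm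

theorem path_l_eq {A : Type} {Y : WObj A} (p : Quiver.Path (WObj.left : WObj A) Y) :
    (match Y, p with
    | WObj.center, p => p = (Quiver.Hom.toPath WEdge.tri).comp (pathCC (toWord p))
    | WObj.left, p => p = Quiver.Path.nil
    | WObj.right, p => p = pathLR (toWord p)) := by
  induction p with
  | nil => exact rfl
  | cons q e ih =>
    change WEdge _ _ at e
    cases e with
    | tri =>
        simp only at ih
        subst ih
        show Quiver.Path.nil.cons WEdge.tri =
          (Quiver.Hom.toPath WEdge.tri).comp (pathCC (toWord (Quiver.Path.nil.cons WEdge.tri)))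
        rw [toWord_cons_tri, toWord_nil]
        rfl
    | letter a =>
        simp only at ih ⊢
        erw [toWord_cons_letter, pathCC_append, ← Quiver.Path.comp_assoc, ← ih]
        rfl
    | tril =>
        simp only at ih ⊢
        rw [toWord_cons_tril]
        conv_lhs => rw [ih]
        rfl

theorem path_lr_eq {A : Type} (p : IA.l A ⟶ IA.r A) : p = pathLR (toWord p) :=
  path_l_eq (Y := WObj.right) p

end Helpers
section Helpers2

variable {A : Type} {C : Type u} {D : Type u₂} [Category.{v} C] [Category.{v₂} D]

/-- Build a natural transformation between functors out of `IA A` from naturality on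
generating edges. -/
def mkNat (M N : IA A ⥤ C) (app : ∀ X : WObj A, M.obj X ⟶ N.obj X)
    (h : ∀ {X Y : WObj A} (e : WEdge X Y),
      M.map (@Quiver.Hom.toPath (WObj A) (instQuiverWObj A) _ _ e) ≫ app Y =
        app X ≫ N.map (@Quiver.Hom.toPath (WObj A) (instQuiverWObj A) _ _ e)) : M ⟶ N where
  app := app
  naturality {X Y} p := by
    change @Quiver.Path (WObj A) _ X Y at p
    induction p with
    | nil =>
        show M.map (𝟙 X) ≫ _ = _ ≫ N.map (𝟙 X)
        simp
    | @cons b c q e ih =>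
        have h1 : M.map (@Quiver.Path.cons (WObj A) (instQuiverWObj A) X b c q e) = M.map q ≫
            M.map (@Quiver.Hom.toPath (WObj A) (instQuiverWObj A) _ _ e) :=
          @Functor.map_comp _ _ _ _ M X b c q
            (@Quiver.Hom.toPath (WObj A) (instQuiverWObj A) _ _ e)
        have h2 : N.map (@Quiver.Path.cons (WObj A) (instQuiverWObj A) X b c q e) = N.map q ≫
            N.map (@Quiver.Hom.toPath (WObj A) (instQuiverWObj A) _ _ e) :=
          @Functor.map_comp _ _ _ _ N X b c q
            (@Quiver.Hom.toPath (WObj A) (instQuiverWObj A) _ _ e)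
        erw [h1, h2, Category.assoc, h e, ← Category.assoc, ih, Category.assoc]

theorem accepts_objL {LI LO : C} {f : List A → (LI ⟶ LO)} {M : IA A ⥤ C}
    (h : Accepts M (mkLang LI LO f)) : M.obj (IA.l A) = LI :=
  congrArg (fun (T : OA A ⥤ C) => T.obj (OA.l A)) h

theorem accepts_objR {LI LO : C} {f : List A → (LI ⟶ LO)} {M : IA A ⥤ C}
    (h : Accepts M (mkLang LI LO f)) : M.obj (IA.r A) = LO :=
  congrArg (fun (T : OA A ⥤ C) => T.obj (OA.r A)) h

theorem accepts_map {LI LO : C} {f : List A → (LI ⟶ LO)} {M : IA A ⥤ C}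
    (h : Accepts M (mkLang LI LO f)) (p : IA.l A ⟶ IA.r A) :
    M.map p = eqToHom (accepts_objL h) ≫ f (toWord p) ≫ eqToHom (accepts_objR h).symm := by
  have := Functor.congr_hom h (ObjectProperty.homMk p : OA.l A ⟶ OA.r A)
  exact this

theorem accepts_of {LI LO : C} {f : List A → (LI ⟶ LO)} {M : IA A ⥤ C}
    (hl : M.obj (IA.l A) = LI) (hr : M.obj (IA.r A) = LO)
    (hmap : ∀ p : IA.l A ⟶ IA.r A,
      M.map p = eqToHom hl ≫ f (toWord p) ≫ eqToHom hr.symm) :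
    Accepts M (mkLang LI LO f) := by
  have hobj : ∀ X : OA A, (OA.inc A ⋙ M).obj X = (mkLang LI LO f).obj X := by
    rintro ⟨(_ | _ | _), hX⟩
    · exact hl
    · exact absurd rfl hX
    · exact hr
  apply CategoryTheory.Functor.ext hobj ?_
  rintro ⟨(_ | _ | _), hX⟩ ⟨(_ | _ | _), hY⟩ p
  · obtain ⟨p⟩ := p
    have := path_ll_nil p
    subst this
    show M.map (𝟙 (IA.l A)) = _ ≫ 𝟙 LI ≫ _
    simp
    erw [Category.id_comp, eqToHom_trans, eqToHom_refl]
  · exact absurd rfl hY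
  · exact hmap p.hom
  · exact absurd rfl hX
  · exact absurd rfl hX
  · exact absurd rfl hX
  · exact (path_rl_false p.hom).elim
  · exact absurd rfl hY
  · obtain ⟨p⟩ := p
    have := path_rr_nil p
    subst this
    show M.map (𝟙 (IA.r A)) = _ ≫ 𝟙 LO ≫ _
    simp
    erw [Category.id_comp, eqToHom_trans, eqToHom_refl]

/-- The component at `left` of a morphism of automata is an `eqToHom`. -/
theorem hom_app_left {L : OA A ⥤ C} {M N : Auto A L} (α : M ⟶ N) :
    (Auto.nat α).app (IA.l A) =
      eqToHom (congrArg (fun (T : OA A ⥤ C) => T.obj (OA.l A)) (M.2.trans N.2.symm)) := by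
  have := NatTrans.congr_app α.2 (OA.l A)
  rw [eqToHom_app] at this
  exact this

theorem hom_app_right {L : OA A ⥤ C} {M N : Auto A L} (α : M ⟶ N) :
    (Auto.nat α).app (IA.r A) =
      eqToHom (congrArg (fun (T : OA A ⥤ C) => T.obj (OA.r A)) (M.2.trans N.2.symm)) := by
  have := NatTrans.congr_app α.2 (OA.r A)
  rw [eqToHom_app] at this
  exact this

end Helpers2
section Main

variable {A : Type} {C : Type u} {D : Type u₂} [Category.{v} C] [Category.{v₂} D]
variable (F : C ⥤ D) (G : D ⥤ C) (adj : F ⊣ G) {I : C} {O : D}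
  (f : List A → (I ⟶ G.obj O))

theorem map_pathCC_cons {C' : Type*} [Category C'] (P : IA A ⥤ C') (a : A) (w : List A) :
    P.map (pathCC (a :: w)) = P.map (IA.letter a) ≫ P.map (pathCC w) :=
  P.map_comp (IA.letter a) (pathCC w)

theorem map_pathLR {C' : Type*} [Category C'] (P : IA A ⥤ C') (w : List A) :
    P.map (pathLR w) = P.map (IA.tri A) ≫ P.map (pathCC w) ≫ P.map (IA.tril A) := by
  show P.map (IA.tri A ≫ pathCC w ≫ IA.tril A) = _
  rw [P.map_comp, P.map_comp]

/-- The prefunctor underlying `F̄ M`. -/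
def FbarPre (M : Auto A (mkLang I (G.obj O) f)) :
    @Prefunctor (WObj A) (instQuiverWObj A) D _ where
  obj X := match X with
    | WObj.left => F.obj I
    | WObj.center => F.obj (M.1.obj (IA.c A))
    | WObj.right => O
  map {X Y} e := match X, Y, e with
    | _, _, WEdge.tri => F.map (eqToHom (accepts_objL M.2).symm ≫ M.1.map (IA.tri A))
    | _, _, WEdge.letter a => F.map (M.1.map (IA.letter a))
    | _, _, WEdge.tril =>
        F.map (M.1.map (IA.tril A) ≫ eqToHom (accepts_objR M.2)) ≫ adj.counit.app O

/-- The automaton `F̄ M`. -/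
def FbarObj (M : Auto A (mkLang I (G.obj O) f)) : IA A ⥤ D :=
  Paths.lift (FbarPre F G adj f M)

theorem FbarObj_tri (M : Auto A (mkLang I (G.obj O) f)) :
    (FbarObj F G adj f M).map (IA.tri A) =
      F.map (eqToHom (accepts_objL M.2).symm ≫ M.1.map (IA.tri A)) :=
  @Paths.lift_toPath (WObj A) (instQuiverWObj A) _ _ _ _ _ WEdge.tri

theorem FbarObj_letter (M : Auto A (mkLang I (G.obj O) f)) (a : A) :
    (FbarObj F G adj f M).map (IA.letter a) = F.map (M.1.map (IA.letter a)) :=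
  @Paths.lift_toPath (WObj A) (instQuiverWObj A) _ _ _ _ _ (WEdge.letter a)

theorem FbarObj_tril (M : Auto A (mkLang I (G.obj O) f)) :
    (FbarObj F G adj f M).map (IA.tril A) =
      F.map (M.1.map (IA.tril A) ≫ eqToHom (accepts_objR M.2)) ≫ adj.counit.app O :=
  @Paths.lift_toPath (WObj A) (instQuiverWObj A) _ _ _ _ _ WEdge.tril

theorem FbarObj_pathCC (M : Auto A (mkLang I (G.obj O) f)) (w : List A) :
    (FbarObj F G adj f M).map (pathCC w) = F.map (M.1.map (pathCC w)) := by
  induction w with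
  | nil =>
      show (FbarObj F G adj f M).map (𝟙 (IA.c A)) = F.map (M.1.map (𝟙 (IA.c A)))
      simp only [CategoryTheory.Functor.map_id]
      rfl
  | cons a w ih =>
      rw [map_pathCC_cons, FbarObj_letter, ih, map_pathCC_cons M.1 a w, F.map_comp]
      rfl

theorem FbarObj_accepts (M : Auto A (mkLang I (G.obj O) f)) :
    Accepts (FbarObj F G adj f M)
      (mkLang (F.obj I) O (fun w => (adj.homEquiv I O).symm (f w))) := by
  apply accepts_of (hl := rfl) (hr := rfl)
  intro p
  have h1 := accepts_map M.2 p
  have h2 : (FbarObj F G adj f M).map p =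
      F.map (eqToHom (accepts_objL M.2).symm) ≫ F.map (M.1.map p) ≫
        F.map (eqToHom (accepts_objR M.2)) ≫ adj.counit.app O := by
    conv_lhs => rw [path_lr_eq p]
    conv_rhs => rw [path_lr_eq p]
    rw [map_pathLR, map_pathLR, FbarObj_tri, FbarObj_pathCC, FbarObj_tril]
    simp only [Functor.map_comp, Category.assoc]
    exact Category.assoc _ _ _
  rw [h2, h1]
  simp [Adjunction.homEquiv_counit, eqToHom_map]
  exact (Category.comp_id _).symm

/-- The prefunctor underlying `Ḡ N`. -/
def GbarPre (N : Auto A (mkLang (F.obj I) O (fun w => (adj.homEquiv I O).symm (f w)))) :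
    @Prefunctor (WObj A) (instQuiverWObj A) C _ where
  obj X := match X with
    | WObj.left => I
    | WObj.center => G.obj (N.1.obj (IA.c A))
    | WObj.right => G.obj O
  map {X Y} e := match X, Y, e with
    | _, _, WEdge.tri =>
        adj.unit.app I ≫ G.map (eqToHom (accepts_objL N.2).symm ≫ N.1.map (IA.tri A))
    | _, _, WEdge.letter a => G.map (N.1.map (IA.letter a))
    | _, _, WEdge.tril => G.map (N.1.map (IA.tril A) ≫ eqToHom (accepts_objR N.2))

/-- The automaton `Ḡ N`. -/
def GbarObj (N : Auto A (mkLang (F.obj I) O (fun w => (adj.homEquiv I O).symm (f w)))) :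
    IA A ⥤ C :=
  Paths.lift (GbarPre F G adj f N)

theorem GbarObj_tri (N : Auto A (mkLang (F.obj I) O (fun w => (adj.homEquiv I O).symm (f w)))) :
    (GbarObj F G adj f N).map (IA.tri A) =
      adj.unit.app I ≫ G.map (eqToHom (accepts_objL N.2).symm ≫ N.1.map (IA.tri A)) :=
  @Paths.lift_toPath (WObj A) (instQuiverWObj A) _ _ _ _ _ WEdge.tri

theorem GbarObj_letter
    (N : Auto A (mkLang (F.obj I) O (fun w => (adj.homEquiv I O).symm (f w)))) (a : A) :
    (GbarObj F G adj f N).map (IA.letter a) = G.map (N.1.map (IA.letter a)) :=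
  @Paths.lift_toPath (WObj A) (instQuiverWObj A) _ _ _ _ _ (WEdge.letter a)

theorem GbarObj_tril
    (N : Auto A (mkLang (F.obj I) O (fun w => (adj.homEquiv I O).symm (f w)))) :
    (GbarObj F G adj f N).map (IA.tril A) =
      G.map (N.1.map (IA.tril A) ≫ eqToHom (accepts_objR N.2)) :=
  @Paths.lift_toPath (WObj A) (instQuiverWObj A) _ _ _ _ _ WEdge.tril

theorem GbarObj_pathCC
    (N : Auto A (mkLang (F.obj I) O (fun w => (adj.homEquiv I O).symm (f w)))) (w : List A) :
    (GbarObj F G adj f N).map (pathCC w) = G.map (N.1.map (pathCC w)) := by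
  induction w with
  | nil =>
      show (GbarObj F G adj f N).map (𝟙 (IA.c A)) = G.map (N.1.map (𝟙 (IA.c A)))
      simp only [CategoryTheory.Functor.map_id]
      rfl
  | cons a w ih =>
      rw [map_pathCC_cons, GbarObj_letter, ih, map_pathCC_cons N.1 a w, G.map_comp]
      rfl

theorem GbarObj_accepts
    (N : Auto A (mkLang (F.obj I) O (fun w => (adj.homEquiv I O).symm (f w)))) :
    Accepts (GbarObj F G adj f N) (mkLang I (G.obj O) f) := by
  apply accepts_of (hl := rfl) (hr := rfl)
  intro p
  have h1 := accepts_map N.2 p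
  have h2 : (GbarObj F G adj f N).map p =
      adj.unit.app I ≫ G.map (eqToHom (accepts_objL N.2).symm) ≫ G.map (N.1.map p) ≫
        G.map (eqToHom (accepts_objR N.2)) := by
    conv_lhs => rw [path_lr_eq p]
    conv_rhs => rw [path_lr_eq p]
    rw [map_pathLR, map_pathLR, GbarObj_tri, GbarObj_pathCC, GbarObj_tril]
    simp only [Functor.map_comp, Category.assoc]
    exact (Category.assoc _ _ _).trans (whisker_eq _ (Category.assoc _ _ _))
  rw [h2, h1]
  have h3 : adj.unit.app I ≫ G.map ((adj.homEquiv I O).symm (f (toWord p))) = f (toWord p) := by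
    have := adj.homEquiv_unit (X := I) (Y := O) (f := (adj.homEquiv I O).symm (f (toWord p)))
    rw [← this]
    exact (adj.homEquiv I O).apply_symm_apply _
  simp only [Functor.map_comp, eqToHom_map, eqToHom_trans, eqToHom_refl, Category.comp_id,
    Category.id_comp, Category.assoc]
  simp
  exact h3.trans (Category.comp_id _).symm

end Main
section Main2

variable {A : Type} {C : Type u} {D : Type u₂} [Category.{v} C] [Category.{v₂} D]
variable (F : C ⥤ D) (G : D ⥤ C) (adj : F ⊣ G) {I : C} {O : D}
  (f : List A → (I ⟶ G.obj O))

def FbarAuto (M : Auto A (mkLang I (G.obj O) f)) :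
    Auto A (mkLang (F.obj I) O (fun w => (adj.homEquiv I O).symm (f w))) :=
  ⟨FbarObj F G adj f M, FbarObj_accepts F G adj f M⟩

def GbarAuto (N : Auto A (mkLang (F.obj I) O (fun w => (adj.homEquiv I O).symm (f w)))) :
    Auto A (mkLang I (G.obj O) f) :=
  ⟨GbarObj F G adj f N, GbarObj_accepts F G adj f N⟩

/-- morphism part of `F̄` (underlying natural transformation) -/
def FbarMap {M M' : Auto A (mkLang I (G.obj O) f)} (α : M ⟶ M') :
    FbarObj F G adj f M ⟶ FbarObj F G adj f M' :=
  mkNat _ _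
    (fun X => match X with
      | WObj.left => 𝟙 (F.obj I)
      | WObj.center => F.map ((Auto.nat α).app (IA.c A))
      | WObj.right => 𝟙 O)
    (by
      intro X Y e
      cases e with
      | tri =>
          show (FbarObj F G adj f M).map (IA.tri A) ≫ F.map ((Auto.nat α).app (IA.c A)) =
            𝟙 (F.obj I) ≫ (FbarObj F G adj f M').map (IA.tri A)
          erw [FbarObj_tri, FbarObj_tri, Category.id_comp, ← F.map_comp, Category.assoc,
            (Auto.nat α).naturality (IA.tri A), ← Category.assoc, hom_app_left α,
            eqToHom_trans]
      | letter a =>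
          show (FbarObj F G adj f M).map (IA.letter a) ≫ F.map ((Auto.nat α).app (IA.c A)) =
            F.map ((Auto.nat α).app (IA.c A)) ≫ (FbarObj F G adj f M').map (IA.letter a)
          erw [FbarObj_letter, FbarObj_letter, ← F.map_comp, ← F.map_comp,
            (Auto.nat α).naturality (IA.letter a)]
      | tril =>
          show (FbarObj F G adj f M).map (IA.tril A) ≫
              𝟙 ((FbarObj F G adj f M).obj (IA.r A)) =
            F.map ((Auto.nat α).app (IA.c A)) ≫ (FbarObj F G adj f M').map (IA.tril A)
          erw [Category.comp_id, FbarObj_tril, FbarObj_tril]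
          erw [← Category.assoc, ← F.map_comp]
          congr 1
          erw [← Category.assoc, ← (Auto.nat α).naturality (IA.tril A), Category.assoc,
            hom_app_right α, eqToHom_trans])

/-- morphism part of `Ḡ` (underlying natural transformation) -/
def GbarMap {N N' : Auto A (mkLang (F.obj I) O (fun w => (adj.homEquiv I O).symm (f w)))}
    (α : N ⟶ N') : GbarObj F G adj f N ⟶ GbarObj F G adj f N' :=
  mkNat _ _
    (fun X => match X with
      | WObj.left => 𝟙 I
      | WObj.center => G.map ((Auto.nat α).app (IA.c A))
      | WObj.right => 𝟙 (G.obj O))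
    (by
      intro X Y e
      cases e with
      | tri =>
          show (GbarObj F G adj f N).map (IA.tri A) ≫ G.map ((Auto.nat α).app (IA.c A)) =
            𝟙 I ≫ (GbarObj F G adj f N').map (IA.tri A)
          erw [GbarObj_tri, GbarObj_tri, Category.id_comp, Category.assoc, ← G.map_comp,
            Category.assoc, (Auto.nat α).naturality (IA.tri A), ← Category.assoc,
            hom_app_left α, eqToHom_trans]
          rfl
      | letter a =>
          show (GbarObj F G adj f N).map (IA.letter a) ≫ G.map ((Auto.nat α).app (IA.c A)) =
            G.map ((Auto.nat α).app (IA.c A)) ≫ (GbarObj F G adj f N').map (IA.letter a)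
          erw [GbarObj_letter, GbarObj_letter, ← G.map_comp, ← G.map_comp,
            (Auto.nat α).naturality (IA.letter a)]
      | tril =>
          show (GbarObj F G adj f N).map (IA.tril A) ≫
              𝟙 ((GbarObj F G adj f N).obj (IA.r A)) =
            G.map ((Auto.nat α).app (IA.c A)) ≫ (GbarObj F G adj f N').map (IA.tril A)
          erw [Category.comp_id, GbarObj_tril, GbarObj_tril]
          erw [← G.map_comp]
          congr 1
          erw [← Category.assoc, ← (Auto.nat α).naturality (IA.tril A), Category.assoc,
            hom_app_right α, eqToHom_trans])

/-- The lifted functor `F̄`. -/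
def Fbar : Auto A (mkLang I (G.obj O) f) ⥤
    Auto A (mkLang (F.obj I) O (fun w => (adj.homEquiv I O).symm (f w))) where
  obj M := FbarAuto F G adj f M
  map {M M'} α := ⟨FbarMap F G adj f α, by
    apply NatTrans.ext
    funext X
    rcases X with ⟨(_ | _ | _), hX⟩
    · erw [eqToHom_app]; rfl
    · exact absurd rfl hX
    · erw [eqToHom_app]; rfl⟩
  map_id M := by
    apply Subtype.ext
    apply NatTrans.ext
    funext X
    cases X with
    | left => rfl
    | center => exact F.map_id _
    | right => rfl
  map_comp {M M' M''} α β := by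
    apply Subtype.ext
    apply NatTrans.ext
    funext X
    cases X with
    | left => exact (Category.id_comp _).symm
    | center => exact F.map_comp _ _
    | right => exact (Category.id_comp _).symm

/-- The lifted functor `Ḡ`. -/
def Gbar : Auto A (mkLang (F.obj I) O (fun w => (adj.homEquiv I O).symm (f w))) ⥤
    Auto A (mkLang I (G.obj O) f) where
  obj N := GbarAuto F G adj f N
  map {N N'} α := ⟨GbarMap F G adj f α, by
    apply NatTrans.ext
    funext X
    rcases X with ⟨(_ | _ | _), hX⟩
    · erw [eqToHom_app]; rfl
    · exact absurd rfl hX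
    · erw [eqToHom_app]; rfl⟩
  map_id N := by
    apply Subtype.ext
    apply NatTrans.ext
    funext X
    cases X with
    | left => rfl
    | center => exact G.map_id _
    | right => rfl
  map_comp {N N' N''} α β := by
    apply Subtype.ext
    apply NatTrans.ext
    funext X
    cases X with
    | left => exact (Category.id_comp _).symm
    | center => exact G.map_comp _ _
    | right => exact (Category.id_comp _).symm

end Main2
section Main3

variable {A : Type} {C : Type u} {D : Type u₂} [Category.{v} C] [Category.{v₂} D]
variable (F : C ⥤ D) (G : D ⥤ C) (adj : F ⊣ G) {I : C} {O : D}
  (f : List A → (I ⟶ G.obj O))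

theorem FbarAuto_fst (M : Auto A (mkLang I (G.obj O) f)) :
    (FbarAuto F G adj f M).1 = FbarObj F G adj f M := rfl

theorem GbarAuto_fst (N : Auto A (mkLang (F.obj I) O (fun w => (adj.homEquiv I O).symm (f w)))) :
    (GbarAuto F G adj f N).1 = GbarObj F G adj f N := rfl

theorem GbarFbar_tri (M : Auto A (mkLang I (G.obj O) f)) :
    (GbarObj F G adj f (FbarAuto F G adj f M)).map (IA.tri A) =
      adj.unit.app I ≫ G.map (𝟙 (F.obj I) ≫ (FbarObj F G adj f M).map (IA.tri A)) :=
  @Paths.lift_toPath (WObj A) (instQuiverWObj A) _ _ _ _ _ WEdge.tri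

theorem GbarFbar_tril (M : Auto A (mkLang I (G.obj O) f)) :
    (GbarObj F G adj f (FbarAuto F G adj f M)).map (IA.tril A) =
      G.map ((FbarObj F G adj f M).map (IA.tril A) ≫ 𝟙 O) :=
  @Paths.lift_toPath (WObj A) (instQuiverWObj A) _ _ _ _ _ WEdge.tril

theorem FbarGbar_tri
    (N : Auto A (mkLang (F.obj I) O (fun w => (adj.homEquiv I O).symm (f w)))) :
    (FbarObj F G adj f (GbarAuto F G adj f N)).map (IA.tri A) =
      F.map (𝟙 I ≫ (GbarObj F G adj f N).map (IA.tri A)) :=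
  @Paths.lift_toPath (WObj A) (instQuiverWObj A) _ _ _ _ _ WEdge.tri

theorem FbarGbar_tril
    (N : Auto A (mkLang (F.obj I) O (fun w => (adj.homEquiv I O).symm (f w)))) :
    (FbarObj F G adj f (GbarAuto F G adj f N)).map (IA.tril A) =
      F.map ((GbarObj F G adj f N).map (IA.tril A) ≫ 𝟙 (G.obj O)) ≫ adj.counit.app O :=
  @Paths.lift_toPath (WObj A) (instQuiverWObj A) _ _ _ _ _ WEdge.tril

/-- unit component (underlying natural transformation) -/
def unitNat (M : Auto A (mkLang I (G.obj O) f)) :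
    M.1 ⟶ GbarObj F G adj f (FbarAuto F G adj f M) :=
  mkNat _ _
    (fun X => match X with
      | WObj.left => eqToHom (accepts_objL M.2)
      | WObj.center => adj.unit.app (M.1.obj (IA.c A))
      | WObj.right => eqToHom (accepts_objR M.2))
    (by
      intro X Y e
      cases e with
      | tri =>
          show M.1.map (IA.tri A) ≫ adj.unit.app (M.1.obj (IA.c A)) =
            eqToHom (accepts_objL M.2) ≫
              (GbarObj F G adj f (FbarAuto F G adj f M)).map (IA.tri A)
          erw [GbarFbar_tri, FbarObj_tri, Category.id_comp]
          change M.1.map (IA.tri A) ≫ adj.unit.app (M.1.obj (IA.c A)) = eqToHom (accepts_objL M.2) ≫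
            adj.unit.app I ≫ G.map (F.map (eqToHom (accepts_objL M.2).symm ≫ M.1.map (IA.tri A)))
          have hnat := adj.unit.naturality (eqToHom (accepts_objL M.2).symm ≫
            M.1.map (IA.tri A))
          simp only [Functor.comp_map, Functor.id_map] at hnat
          erw [← hnat]
          simp
      | letter a =>
          show M.1.map (IA.letter a) ≫ adj.unit.app (M.1.obj (IA.c A)) =
            adj.unit.app (M.1.obj (IA.c A)) ≫
              (GbarObj F G adj f (FbarAuto F G adj f M)).map (IA.letter a)
          erw [GbarObj_letter]
          have h1 : ((FbarAuto F G adj f M).1).map (IA.letter a) =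
              F.map (M.1.map (IA.letter a)) := FbarObj_letter F G adj f M a
          erw [h1]
          have hnat := adj.unit.naturality (M.1.map (IA.letter a))
          simp only [Functor.comp_map, Functor.id_map] at hnat
          exact hnat
      | tril =>
          show M.1.map (IA.tril A) ≫ eqToHom (accepts_objR M.2) =
            adj.unit.app (M.1.obj (IA.c A)) ≫
              (GbarObj F G adj f (FbarAuto F G adj f M)).map (IA.tril A)
          erw [GbarFbar_tril, FbarObj_tril]
          change M.1.map (IA.tril A) ≫ eqToHom (accepts_objR M.2) =
            adj.unit.app (M.1.obj (IA.c A)) ≫ G.map ((F.map (M.1.map (IA.tril A) ≫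
              eqToHom (accepts_objR M.2)) ≫ adj.counit.app O) ≫ 𝟙 O)
          simp only [Category.comp_id, Functor.map_comp]
          have hnat := adj.unit.naturality (M.1.map (IA.tril A) ≫
            eqToHom (accepts_objR M.2))
          simp only [Functor.comp_map, Functor.id_map, Functor.map_comp] at hnat
          erw [← Category.assoc, ← Category.assoc, ← hnat]
          simp [adj.right_triangle_components])

/-- counit component (underlying natural transformation) -/
def counitNat (N : Auto A (mkLang (F.obj I) O (fun w => (adj.homEquiv I O).symm (f w)))) :
    FbarObj F G adj f (GbarAuto F G adj f N) ⟶ N.1 :=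
  mkNat _ _
    (fun X => match X with
      | WObj.left => eqToHom (accepts_objL N.2).symm
      | WObj.center => adj.counit.app (N.1.obj (IA.c A))
      | WObj.right => eqToHom (accepts_objR N.2).symm)
    (by
      intro X Y e
      cases e with
      | tri =>
          show (FbarObj F G adj f (GbarAuto F G adj f N)).map (IA.tri A) ≫
              adj.counit.app (N.1.obj (IA.c A)) =
            eqToHom (accepts_objL N.2).symm ≫ N.1.map (IA.tri A)
          erw [FbarGbar_tri, GbarObj_tri, Category.id_comp]
          change F.map (adj.unit.app I ≫ G.map (eqToHom (accepts_objL N.2).symm ≫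
              N.1.map (IA.tri A))) ≫ adj.counit.app (N.1.obj (IA.c A)) =
            eqToHom (accepts_objL N.2).symm ≫ N.1.map (IA.tri A)
          simp only [Functor.map_comp, Category.assoc]
          have hnat := adj.counit.naturality (eqToHom (accepts_objL N.2).symm ≫
            N.1.map (IA.tri A))
          simp only [Functor.comp_map, Functor.id_map, Functor.map_comp] at hnat
          rw [Category.assoc] at hnat
          erw [hnat, ← Category.assoc, adj.left_triangle_components]
          exact Category.id_comp _
      | letter a =>
          show (FbarObj F G adj f (GbarAuto F G adj f N)).map (IA.letter a) ≫
              adj.counit.app (N.1.obj (IA.c A)) =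
            adj.counit.app (N.1.obj (IA.c A)) ≫ N.1.map (IA.letter a)
          erw [FbarObj_letter]
          have h1 : ((GbarAuto F G adj f N).1).map (IA.letter a) =
              G.map (N.1.map (IA.letter a)) := GbarObj_letter F G adj f N a
          erw [h1]
          have hnat := adj.counit.naturality (N.1.map (IA.letter a))
          simp only [Functor.comp_map, Functor.id_map] at hnat
          exact hnat
      | tril =>
          show (FbarObj F G adj f (GbarAuto F G adj f N)).map (IA.tril A) ≫
              eqToHom (accepts_objR N.2).symm =
            adj.counit.app (N.1.obj (IA.c A)) ≫ N.1.map (IA.tril A)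
          erw [FbarGbar_tril, GbarObj_tril]
          change (F.map (G.map (N.1.map (IA.tril A) ≫ eqToHom (accepts_objR N.2)) ≫ 𝟙 (G.obj O)) ≫
              adj.counit.app O) ≫ eqToHom (accepts_objR N.2).symm =
            adj.counit.app (N.1.obj (IA.c A)) ≫ N.1.map (IA.tril A)
          simp only [Category.comp_id, Functor.map_comp, Category.assoc]
          have hnat := adj.counit.naturality (N.1.map (IA.tril A) ≫
            eqToHom (accepts_objR N.2))
          simp only [Functor.comp_map, Functor.id_map, Functor.map_comp] at hnat
          show F.map (G.map (N.1.map (IA.tril A))) ≫ F.map (G.map (eqToHom (accepts_objR N.2))) ≫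
              adj.counit.app O ≫ eqToHom (accepts_objR N.2).symm =
            adj.counit.app (N.1.obj (IA.c A)) ≫ N.1.map (IA.tril A)
          rw [← Category.assoc] at hnat
          rw [← Category.assoc, ← Category.assoc]
          erw [hnat]
          simp)

/-- unit component as a morphism of automata -/
def unitApp (M : Auto A (mkLang I (G.obj O) f)) :
    M ⟶ GbarAuto F G adj f (FbarAuto F G adj f M) :=
  ⟨unitNat F G adj f M, by
    apply NatTrans.ext
    funext X
    rcases X with ⟨(_ | _ | _), hX⟩
    · erw [eqToHom_app]; rfl
    · exact absurd rfl hX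
    · erw [eqToHom_app]; rfl⟩

/-- counit component as a morphism of automata -/
def counitApp (N : Auto A (mkLang (F.obj I) O (fun w => (adj.homEquiv I O).symm (f w)))) :
    FbarAuto F G adj f (GbarAuto F G adj f N) ⟶ N :=
  ⟨counitNat F G adj f N, by
    apply NatTrans.ext
    funext X
    rcases X with ⟨(_ | _ | _), hX⟩
    · erw [eqToHom_app]; rfl
    · exact absurd rfl hX
    · erw [eqToHom_app]; rfl⟩

/-- the unit as a natural transformation -/
def unitTrans : 𝟭 (Auto A (mkLang I (G.obj O) f)) ⟶ Fbar F G adj f ⋙ Gbar F G adj f where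
  app M := unitApp F G adj f M
  naturality {M M'} α := by
    apply Subtype.ext
    apply NatTrans.ext
    funext X
    cases X with
    | left =>
        show (Auto.nat α).app (IA.l A) ≫ eqToHom (accepts_objL M'.2) =
          eqToHom (accepts_objL M.2) ≫ 𝟙 I
        erw [Category.comp_id, hom_app_left α, eqToHom_trans]
    | center =>
        show (Auto.nat α).app (IA.c A) ≫ adj.unit.app (M'.1.obj (IA.c A)) =
          adj.unit.app (M.1.obj (IA.c A)) ≫ G.map (F.map ((Auto.nat α).app (IA.c A)))
        have hnat := adj.unit.naturality ((Auto.nat α).app (IA.c A))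
        simp only [Functor.comp_map, Functor.id_map] at hnat
        exact hnat
    | right =>
        show (Auto.nat α).app (IA.r A) ≫ eqToHom (accepts_objR M'.2) =
          eqToHom (accepts_objR M.2) ≫ 𝟙 (G.obj O)
        erw [Category.comp_id, hom_app_right α, eqToHom_trans]

/-- the counit as a natural transformation -/
def counitTrans : Gbar F G adj f ⋙ Fbar F G adj f ⟶
    𝟭 (Auto A (mkLang (F.obj I) O (fun w => (adj.homEquiv I O).symm (f w)))) where
  app N := counitApp F G adj f N
  naturality {N N'} α := by
    apply Subtype.ext
    apply NatTrans.ext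
    funext X
    cases X with
    | left =>
        show 𝟙 (F.obj I) ≫ eqToHom (accepts_objL N'.2).symm =
          eqToHom (accepts_objL N.2).symm ≫ (Auto.nat α).app (IA.l A)
        erw [Category.id_comp, hom_app_left α, eqToHom_trans]
    | center =>
        show F.map (G.map ((Auto.nat α).app (IA.c A))) ≫ adj.counit.app (N'.1.obj (IA.c A)) =
          adj.counit.app (N.1.obj (IA.c A)) ≫ (Auto.nat α).app (IA.c A)
        have hnat := adj.counit.naturality ((Auto.nat α).app (IA.c A))
        simp only [Functor.comp_map, Functor.id_map] at hnat
        exact hnat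
    | right =>
        show 𝟙 O ≫ eqToHom (accepts_objR N'.2).symm =
          eqToHom (accepts_objR N.2).symm ≫ (Auto.nat α).app (IA.r A)
        erw [Category.id_comp, hom_app_right α, eqToHom_trans]

/-- the lifted adjunction -/
def liftedAdj : Fbar F G adj f ⊣ Gbar F G adj f :=
  Adjunction.mkOfUnitCounit
    { unit := unitTrans F G adj f
      counit := counitTrans F G adj f
      left_triangle := by
        apply NatTrans.ext
        funext M
        apply Subtype.ext
        apply NatTrans.ext
        funext X
        cases X with
        | left =>
            show 𝟙 (F.obj I) ≫ 𝟙 (F.obj I) ≫ 𝟙 (F.obj I) = 𝟙 (F.obj I)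
            simp
        | center =>
            refine Eq.trans (whisker_eq (F.map (adj.unit.app (M.1.obj (IA.c A))))
              (Category.id_comp (adj.counit.app (F.obj (M.1.obj (IA.c A)))))) ?_
            exact adj.left_triangle_components _
        | right =>
            show 𝟙 O ≫ 𝟙 O ≫ 𝟙 O = 𝟙 O
            simp
      right_triangle := by
        apply NatTrans.ext
        funext N
        apply Subtype.ext
        apply NatTrans.ext
        funext X
        cases X with
        | left =>
            show 𝟙 I ≫ 𝟙 I ≫ 𝟙 I = 𝟙 I
            simp
        | center =>
            refine Eq.trans (whisker_eq (adj.unit.app (G.obj (N.1.obj (IA.c A))))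
              (Category.id_comp (G.map (adj.counit.app (N.1.obj (IA.c A)))))) ?_
            exact adj.right_triangle_components _
        | right =>
            show 𝟙 (G.obj O) ≫ 𝟙 (G.obj O) ≫ 𝟙 (G.obj O) = 𝟙 (G.obj O)
            simp }

end Main3
/-- Lifting an adjunction `F ⊣ G` to categories of automata: given an adjunction
`F ⊣ G : D → C`, an object `I` of `C`, an object `O` of `D`, and corresponding languages
`L_C` (valued in `C(I, G O)`) and `L_D` (valued in `D(F I, O)`, obtained by applying the
hom-set bijection `(-)^*` of the adjunction to the values of `L_C`), the adjunction lifts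
to an adjunction `F̄ ⊣ Ḡ` between `Auto(L_C)` and `Auto(L_D)` commuting with the
state-object functors `St`. -/
theorem lift_adjunction_to_automata (A : Type) {C : Type u} {D : Type u₂} [Category.{v} C]
    [Category.{v₂} D] (F : C ⥤ D) (G : D ⥤ C) (adj : F ⊣ G) (I : C) (O : D)
    (f : List A → (I ⟶ G.obj O)) :
    ∃ (Fb : Auto A (mkLang I (G.obj O) f) ⥤
        Auto A (mkLang (F.obj I) O (fun w => (adj.homEquiv I O).symm (f w))))
      (Gb : Auto A (mkLang (F.obj I) O (fun w => (adj.homEquiv I O).symm (f w))) ⥤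
        Auto A (mkLang I (G.obj O) f)),
      Nonempty (Fb ⊣ Gb) ∧
      Fb ⋙ St A (mkLang (F.obj I) O (fun w => (adj.homEquiv I O).symm (f w))) =
        St A (mkLang I (G.obj O) f) ⋙ F ∧
      Gb ⋙ St A (mkLang I (G.obj O) f) =
        St A (mkLang (F.obj I) O (fun w => (adj.homEquiv I O).symm (f w))) ⋙ G := by
  refine ⟨Fbar F G adj f, Gbar F G adj f, ⟨liftedAdj F G adj f⟩, ?_, ?_⟩
  · rfl
  · rfl
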